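/- arXiv:math/0407491 — 3 statements merged into one kernel-verified Lean document; each statement's English description precedes it below -/
import Mathlib

section
/- Let A ⊆ R be a set of Demazure roots of V and suppose there are positive integers (k_m)_{m∈A} with Σ_{m∈A} k_m·m = 0. Then A ⊆ S, i.e., every element of A is a semisimple root. -/
open Finset

/-- The pairing `⟨v, m⟩ = ∑ i, v i * m i` between `N = ℤ^d` and `M = ℤ^d`. -/
def pairZ {d : ℕ} (v m : Fin d → ℤ) : ℤ := ∑ i, v i * m i

/-- `m` is a Demazure root of the finite set `V ⊆ N`: `⟨v, m⟩ = -1` for some `v ∈ V`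
and `⟨v', m⟩ ≥ 0` for all other `v' ∈ V`. -/
def IsDemazureRoot {d : ℕ} (V : Finset (Fin d → ℤ)) (m : Fin d → ℤ) : Prop :=
  ∃ v ∈ V, pairZ v m = -1 ∧ ∀ v' ∈ V, v' ≠ v → 0 ≤ pairZ v' m

/-- The set of nonnegative real combinations of elements of `V` is all of `ℝ^d`. -/
def PosSpans {d : ℕ} (V : Finset (Fin d → ℤ)) : Prop :=
  ∀ x : Fin d → ℝ, ∃ c : (Fin d → ℤ) → ℝ, (∀ v, 0 ≤ c v) ∧
    x = ∑ v ∈ V, c v • (fun i => ((v i : ℤ) : ℝ))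


def RootAt {d : ℕ} (V : Finset (Fin d → ℤ)) (m v : Fin d → ℤ) : Prop :=
  v ∈ V ∧ pairZ v m = -1 ∧ ∀ u ∈ V, u ≠ v → 0 ≤ pairZ u m

lemma pairZ_add {d : ℕ} (v m m' : Fin d → ℤ) :
    pairZ v (m + m') = pairZ v m + pairZ v m' := by
  simp [pairZ, mul_add, Finset.sum_add_distrib]

lemma pairZ_neg {d : ℕ} (v m : Fin d → ℤ) : pairZ v (-m) = -pairZ v m := by
  simp [pairZ, Finset.sum_neg_distrib]

lemma pairZ_zero {d : ℕ} (v : Fin d → ℤ) : pairZ v 0 = 0 := by simp [pairZ]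

lemma pairZ_smul {d : ℕ} (v : Fin d → ℤ) (c : ℤ) (m : Fin d → ℤ) :
    pairZ v (c • m) = c * pairZ v m := by
  simp [pairZ, Finset.mul_sum, mul_left_comm]

lemma pairZ_sum {d : ℕ} {ι : Type*} (v : Fin d → ℤ) (s : Finset ι) (f : ι → Fin d → ℤ) :
    pairZ v (∑ i ∈ s, f i) = ∑ i ∈ s, pairZ v (f i) := by
  simp only [pairZ, Finset.sum_apply, Finset.mul_sum]
  exact Finset.sum_comm

lemma root_ne_zero {d : ℕ} {V : Finset (Fin d → ℤ)} {m v : Fin d → ℤ}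
    (h : RootAt V m v) : m ≠ 0 := by
  rintro rfl
  simp [RootAt, pairZ_zero] at h

lemma exists_neg_pair {d : ℕ} {V : Finset (Fin d → ℤ)} (hVs : PosSpans V)
    {m : Fin d → ℤ} (hm : m ≠ 0) : ∃ v ∈ V, pairZ v m ≤ -1 := by
  by_contra h
  push_neg at h
  have h' : ∀ v ∈ V, (0 : ℤ) ≤ pairZ v m := fun v hv => by have := h v hv; omega
  obtain ⟨c, hc, hx⟩ := hVs (fun i => -(m i : ℝ))
  have hxi : ∀ i, -(m i : ℝ) = ∑ v ∈ V, c v * (v i : ℝ) := by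
    intro i
    have := congrFun hx i
    simpa [Finset.sum_apply] using this
  have key : (∑ i, -(m i : ℝ) * (m i : ℝ)) = ∑ v ∈ V, c v * ((pairZ v m : ℤ) : ℝ) := by
    calc (∑ i, -(m i : ℝ) * (m i : ℝ))
        = ∑ i, (∑ v ∈ V, c v * (v i : ℝ)) * (m i : ℝ) := by
          refine Finset.sum_congr rfl fun i _ => by rw [hxi]
      _ = ∑ v ∈ V, ∑ i, c v * ((v i : ℝ) * (m i : ℝ)) := by
          rw [Finset.sum_comm]
          refine Finset.sum_congr rfl fun i _ => by rw [Finset.sum_mul]; exact Finset.sum_congr rfl fun v _ => by ring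
      _ = ∑ v ∈ V, c v * ((pairZ v m : ℤ) : ℝ) := by
          refine Finset.sum_congr rfl fun v _ => by
            rw [← Finset.mul_sum]
            congr 1
            push_cast [pairZ]
            ring_nf
  have hneg : (∑ i, -(m i : ℝ) * (m i : ℝ)) < 0 := by
    have : (0 : ℝ) < ∑ i, (m i : ℝ) ^ 2 := by
      have hne : ∃ i, m i ≠ 0 := by
        by_contra hh; push_neg at hh; exact hm (funext fun i => hh i)
      obtain ⟨i, hi⟩ := hne
      refine Finset.sum_pos' (fun j _ => sq_nonneg _) ⟨i, Finset.mem_univ i, ?_⟩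
      positivity
    calc (∑ i, -(m i : ℝ) * (m i : ℝ)) = -∑ i, (m i : ℝ) ^ 2 := by
          rw [← Finset.sum_neg_distrib]; refine Finset.sum_congr rfl fun i _ => by ring
      _ < 0 := by linarith
  have hpos : (0 : ℝ) ≤ ∑ v ∈ V, c v * ((pairZ v m : ℤ) : ℝ) := by
    refine Finset.sum_nonneg fun v hv => mul_nonneg (hc v) ?_
    exact_mod_cast h' v hv
  rw [key] at hneg
  linarith

lemma add_root {d : ℕ} {V : Finset (Fin d → ℤ)} (hVs : PosSpans V)
    {m v m' v' : Fin d → ℤ} (hmv : RootAt V m v) (hmv' : RootAt V m' v')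
    (hne : v ≠ v') (hpos : 1 ≤ pairZ v m') :
    m + m' = 0 ∨ RootAt V (m + m') v' := by
  obtain ⟨hvV, hvm, hvrest⟩ := hmv
  obtain ⟨hv'V, hv'm', hv'rest⟩ := hmv'
  by_cases h0 : m + m' = 0
  · exact Or.inl h0
  right
  obtain ⟨u, huV, hu⟩ := exists_neg_pair hVs h0
  have hu' : u = v' := by
    by_contra huv'
    rw [pairZ_add] at hu
    by_cases huv : u = v
    · subst huv
      have := hvrest  -- unused
      omega
    · have h1 := hvrest u huV huv
      have h2 := hv'rest u huV huv'
      omega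
  rw [hu'] at hu
  clear huV hu'
  have hv'm : 0 ≤ pairZ v' m := hvrest v' hv'V (fun h => hne h.symm)
  refine ⟨hv'V, ?_, ?_⟩
  · rw [pairZ_add] at hu ⊢; omega
  · intro w hwV hwv'
    rw [pairZ_add]
    by_cases hwv : w = v
    · subst hwv; omega
    · have h1 := hvrest w hwV hwv
      have h2 := hv'rest w hwV hwv'
      omega


lemma chain_first {d : ℕ} {V : Finset (Fin d → ℤ)} (hVs : PosSpans V) :
    ∀ T : ℕ, 1 ≤ T → ∀ mm vv : ℕ → Fin d → ℤ,
    (∀ i ≤ T, RootAt V (mm i) (vv i)) →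
    (∀ i < T, vv (i + 1) ≠ vv i ∧ 1 ≤ pairZ (vv i) (mm (i + 1))) →
    (∑ i ∈ Finset.range (T + 1), mm i = 0) →
    ∃ w, RootAt V (-(mm 0)) w := by
  intro T
  induction T using Nat.strong_induction_on with
  | _ T IH =>
    intro hT mm vv hroots hedges hsum0
    set s : ℕ → Fin d → ℤ := fun t => ∑ i ∈ Finset.range (t + 1), mm i with hs
    by_cases hzero : ∃ j, j < T ∧ s j = 0
    · obtain ⟨j, hjT, hj0⟩ := hzero
      have hj1 : 1 ≤ j := by
        rcases Nat.eq_zero_or_pos j with rfl | h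
        · exfalso
          have : mm 0 = 0 := by simpa [hs] using hj0
          exact root_ne_zero (hroots 0 (Nat.zero_le _)) this
        · exact h
      exact IH j hjT hj1 mm vv (fun i hi => hroots i (le_trans hi (le_of_lt hjT)))
        (fun i hi => hedges i (lt_trans hi hjT)) hj0
    · push_neg at hzero
      -- forward
      have F : ∀ t, t < T → RootAt V (s t) (vv t) := by
        intro t
        induction t with
        | zero => intro _; simpa [hs] using hroots 0 (Nat.zero_le _)
        | succ t iht =>
          intro htT
          have h1 : t < T := lt_trans (Nat.lt_succ_self t) htT
          have hst : RootAt V (s t) (vv t) := iht h1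
          have hedge := hedges t h1
          have hroot := hroots (t + 1) (le_of_lt htT)
          have hstep := add_root hVs hst hroot (fun h => hedge.1 h.symm) hedge.2
          have hsucc : s (t + 1) = s t + mm (t + 1) := by
            simp [hs, Finset.sum_range_succ]
          rcases hstep with h0 | hr
          · exact absurd (by rw [hsucc, h0]) (hzero (t + 1) htT)
          · rwa [hsucc]
      have hsT : s T = 0 := hsum0
      -- downward
      have D : ∀ j, j ≤ T - 1 → RootAt V (-(s (T - 1 - j))) (vv T) := by
        intro j
        induction j with
        | zero =>
          intro _
          have h1 : s (T - 1) + mm T = 0 := by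
            have hT' : T - 1 + 1 = T := Nat.succ_pred_eq_of_pos hT
            have : s (T - 1) + mm T = s T := by
              simp only [hs]
              rw [hT', Finset.sum_range_succ]
            rw [this, hsT]
          have h2 : -(s (T - 1)) = mm T := by
            have := h1; funext i; have := congrFun h1 i
            simp only [Pi.add_apply, Pi.neg_apply, Pi.zero_apply] at this ⊢
            omega
          rw [Nat.sub_zero, h2]
          exact hroots T le_rfl
        | succ j ihj =>
          intro hjT
          have hj' : j ≤ T - 1 := le_trans (Nat.le_succ j) hjT
          set t := T - 1 - j with ht
          have ht1 : 1 ≤ t := by omega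
          have htT : t < T := by omega
          have hD := ihj hj'
          have hFt : RootAt V (s t) (vv t) := F t htT
          -- key pairing facts
          have hpair : pairZ (vv t) (-(s t)) = 1 := by
            rw [pairZ_neg, hFt.2.1]; ring
          have hneq : vv t ≠ vv T := by
            intro h
            have h1 : pairZ (vv T) (-(s t)) = -1 := hD.2.1
            rw [← h, hpair] at h1
            omega
          have hroott : RootAt V (mm t) (vv t) := hroots t (le_of_lt htT)
          have hstep := add_root hVs hroott hD hneq (by rw [hpair])
          have hdec : mm t + -(s t) = -(s (t - 1)) := by
            have ht' : t - 1 + 1 = t := Nat.succ_pred_eq_of_pos ht1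
            have h1 : s (t - 1) + mm t = s t := by
              simp only [hs]
              rw [ht', Finset.sum_range_succ]
            funext i; have := congrFun h1 i
            simp only [Pi.add_apply, Pi.neg_apply, Pi.zero_apply] at this ⊢
            omega
          have hTj : T - 1 - (j + 1) = t - 1 := by omega
          rw [hTj]
          rcases hstep with h0 | hr
          · exfalso
            rw [hdec] at h0
            have : s (t - 1) = 0 := by
              funext i; have := congrFun h0 i
              simp only [Pi.neg_apply, Pi.zero_apply] at this ⊢
              omega
            exact hzero (t - 1) (by omega) this
          · rwa [hdec] at hr
      have := D (T - 1) le_rfl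
      rw [Nat.sub_self] at this
      exact ⟨vv T, by simpa [hs] using this⟩

lemma grow {d : ℕ} {V : Finset (Fin d → ℤ)} (hVs : PosSpans V)
    (A : Finset (Fin d → ℤ)) (hA : ∀ m ∈ A, IsDemazureRoot V m) :
    ∀ N : ℕ, ∀ k' : (Fin d → ℤ) → ℤ, (∀ m ∈ A, 0 ≤ k' m) → (∑ m ∈ A, k' m) ≤ (N : ℤ) →
    ∀ T : ℕ, ∀ mm vv : ℕ → Fin d → ℤ,
    (∀ i ≤ T, RootAt V (mm i) (vv i)) →
    (∀ i < T, vv (i + 1) ≠ vv i ∧ 1 ≤ pairZ (vv i) (mm (i + 1))) →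
    RootAt V (∑ i ∈ Finset.range (T + 1), mm i) (vv T) →
    ((∑ m ∈ A, k' m • m) + ∑ i ∈ Finset.range (T + 1), mm i = 0) →
    ∃ w, RootAt V (-(mm 0)) w := by
  intro N
  induction N using Nat.strong_induction_on with
  | _ N IH =>
    intro k' hk0 hkN T mm vv hroots hedges hsTroot hrel
    set sT : Fin d → ℤ := ∑ i ∈ Finset.range (T + 1), mm i with hsT
    -- pair the relation with vv T
    have hpairrel : ∑ m ∈ A, k' m * pairZ (vv T) m = 1 := by
      have := congrArg (pairZ (vv T)) hrel
      rw [pairZ_add, pairZ_sum, pairZ_zero] at this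
      have h2 : pairZ (vv T) sT = -1 := hsTroot.2.1
      have h3 : ∀ m ∈ A, pairZ (vv T) (k' m • m) = k' m * pairZ (vv T) m :=
        fun m _ => pairZ_smul _ _ _
      rw [Finset.sum_congr rfl h3] at this
      omega
    -- find a positive term
    have hex : ∃ m' ∈ A, 0 < k' m' * pairZ (vv T) m' := by
      by_contra h
      push_neg at h
      have : ∑ m ∈ A, k' m * pairZ (vv T) m ≤ 0 := Finset.sum_nonpos h
      omega
    obtain ⟨m', hm'A, hm'pos⟩ := hex
    have hk'm' : 0 < k' m' := by
      have h0 := hk0 m' hm'A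
      rcases h0.lt_or_eq with h | h
      · exact h
      · rw [← h] at hm'pos; simp at hm'pos
    have hpairm' : 1 ≤ pairZ (vv T) m' := by nlinarith
    obtain ⟨w, hwV, hwm', hwrest⟩ := hA m' hm'A
    have hwroot : RootAt V m' w := ⟨hwV, hwm', hwrest⟩
    have hwne : w ≠ vv T := by
      intro h; rw [h] at hwm'; omega
    -- extend the chain
    set mm1 : ℕ → Fin d → ℤ := fun i => if i ≤ T then mm i else m' with hmm1
    set vv1 : ℕ → Fin d → ℤ := fun i => if i ≤ T then vv i else w with hvv1
    have hroots1 : ∀ i ≤ T + 1, RootAt V (mm1 i) (vv1 i) := by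
      intro i hi
      by_cases h : i ≤ T
      · simpa [hmm1, hvv1, h] using hroots i h
      · simpa [hmm1, hvv1, h] using hwroot
    have hedges1 : ∀ i < T + 1, vv1 (i + 1) ≠ vv1 i ∧ 1 ≤ pairZ (vv1 i) (mm1 (i + 1)) := by
      intro i hi
      rcases Nat.lt_or_ge i T with h | h
      · have h1 : i ≤ T := le_of_lt h
        have h2 : i + 1 ≤ T := h
        simpa [hmm1, hvv1, h1, h2] using hedges i h
      · have hiT : i = T := by omega
        subst hiT
        have h1 : ¬ (i + 1 ≤ i) := by omega
        simp only [hmm1, hvv1, le_refl, if_pos, h1, if_neg, if_false]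
        exact ⟨hwne, hpairm'⟩
    have hsum1 : ∑ i ∈ Finset.range (T + 2), mm1 i = sT + m' := by
      have : ∑ i ∈ Finset.range (T + 1 + 1), mm1 i
          = ∑ i ∈ Finset.range (T + 1), mm1 i + mm1 (T + 1) := Finset.sum_range_succ _ _
      rw [this]
      have h1 : ∑ i ∈ Finset.range (T + 1), mm1 i = sT := by
        refine Finset.sum_congr rfl fun i hi => ?_
        have : i ≤ T := by
          have := Finset.mem_range.mp hi; omega
        simp [hmm1, this]
      have h2 : mm1 (T + 1) = m' := by simp [hmm1]
      rw [h1, h2]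
    have hstep := add_root hVs hsTroot hwroot (Ne.symm hwne) hpairm'
    rcases hstep with h0 | hroot'
    · -- sum is zero: finish via chain_first
      have hs0 : ∑ i ∈ Finset.range (T + 1 + 1), mm1 i = 0 := by
        rw [hsum1]; exact h0
      obtain ⟨w', hw'⟩ := chain_first hVs (T + 1) (by omega) mm1 vv1 hroots1 hedges1 hs0
      refine ⟨w', ?_⟩
      have : mm1 0 = mm 0 := by simp [hmm1]
      rwa [this] at hw'
    · -- recurse with decreased budget
      set k'' : (Fin d → ℤ) → ℤ := Function.update k' m' (k' m' - 1) with hk''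
      have hk''0 : ∀ m ∈ A, 0 ≤ k'' m := by
        intro m hm
        by_cases h : m = m'
        · subst h; simp [hk'', Function.update_self]; omega
        · simp [hk'', Function.update_of_ne h]; exact hk0 m hm
      have hsum'' : ∑ m ∈ A, k'' m = (∑ m ∈ A, k' m) - 1 := by
        rw [hk'', Finset.sum_update_of_mem hm'A]
        have := Finset.add_sum_erase A k' hm'A
        rw [Finset.sdiff_singleton_eq_erase]
        omega
      have hN1 : 1 ≤ N := by
        have h1 : k' m' ≤ ∑ m ∈ A, k' m := Finset.single_le_sum hk0 hm'A
        have : (1 : ℤ) ≤ (N : ℤ) := by omega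
        exact_mod_cast this
      have hkN'' : ∑ m ∈ A, k'' m ≤ ((N - 1 : ℕ) : ℤ) := by
        rw [hsum'']
        have : ((N - 1 : ℕ) : ℤ) = (N : ℤ) - 1 := by
          push_cast [Nat.cast_sub hN1]; ring
        omega
      have hsmul'' : ∑ m ∈ A, k'' m • m = (∑ m ∈ A, k' m • m) - m' := by
        have hupd : ∀ m ∈ A, k'' m • m = k' m • m - (if m = m' then m' else 0) := by
          intro m hm
          by_cases h : m = m'
          · subst h
            simp only [hk'', Function.update_self, if_pos]
            rw [sub_smul, one_smul]
          · simp [hk'', Function.update_of_ne h, h]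
        rw [Finset.sum_congr rfl hupd, Finset.sum_sub_distrib, Finset.sum_ite_eq' A m' (fun _ => m'),
          if_pos hm'A]
      have hrel'' : (∑ m ∈ A, k'' m • m) + ∑ i ∈ Finset.range (T + 1 + 1), mm1 i = 0 := by
        rw [hsmul'', hsum1]
        linear_combination hrel
      have := IH (N - 1) (by omega) k'' hk''0 hkN'' (T + 1) mm1 vv1 hroots1 hedges1
        (by rw [hsum1]
            have hv : vv1 (T + 1) = w := by simp [hvv1]
            rw [hv]; exact hroot') hrel''
      obtain ⟨w', hw'⟩ := this
      refine ⟨w', ?_⟩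
      have : mm1 0 = mm 0 := by simp [hmm1]
      rwa [this] at hw'


/-- If `A` is a set of Demazure roots of `V` and there are positive integers `k_m` with
`∑_{m ∈ A} k_m · m = 0`, then every element of `A` is a semisimple root. -/
theorem stmt1 {d : ℕ} (V : Finset (Fin d → ℤ)) (hV0 : (0 : Fin d → ℤ) ∉ V)
    (hVs : PosSpans V) (A : Finset (Fin d → ℤ))
    (hA : ∀ m ∈ A, IsDemazureRoot V m)
    (k : (Fin d → ℤ) → ℤ) (hk : ∀ m ∈ A, 0 < k m)
    (hsum : ∑ m ∈ A, k m • m = 0) :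
    ∀ m ∈ A, IsDemazureRoot V (-m) := by

  intro m₀ hm₀
  obtain ⟨v₀, hv₀V, hv₀p, hv₀r⟩ := hA m₀ hm₀
  have hroot₀ : RootAt V m₀ v₀ := ⟨hv₀V, hv₀p, hv₀r⟩
  set k' : (Fin d → ℤ) → ℤ := Function.update k m₀ (k m₀ - 1) with hk'
  have hk'0 : ∀ m ∈ A, 0 ≤ k' m := by
    intro m hm
    by_cases h : m = m₀
    · subst h; simp [hk', Function.update_self]
      have := hk m hm; omega
    · simp [hk', Function.update_of_ne h]
      have := hk m hm; omega
  set N : ℕ := (∑ m ∈ A, k' m).toNat with hN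
  have hkN : (∑ m ∈ A, k' m) ≤ (N : ℤ) := Int.self_le_toNat _
  have hsmul' : ∑ m ∈ A, k' m • m = (∑ m ∈ A, k m • m) - m₀ := by
    have hupd : ∀ m ∈ A, k' m • m = k m • m - (if m = m₀ then m₀ else 0) := by
      intro m hm
      by_cases h : m = m₀
      · subst h
        simp only [hk', Function.update_self, if_pos]
        rw [sub_smul, one_smul]
      · simp [hk', Function.update_of_ne h, h]
    rw [Finset.sum_congr rfl hupd, Finset.sum_sub_distrib,
      Finset.sum_ite_eq' A m₀ (fun _ => m₀), if_pos hm₀]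
  have hrel : (∑ m ∈ A, k' m • m) + ∑ i ∈ Finset.range (0 + 1), (fun _ : ℕ => m₀) i = 0 := by
    rw [hsmul', hsum]
    simp
  have hroots : ∀ i ≤ 0, RootAt V ((fun _ : ℕ => m₀) i) ((fun _ : ℕ => v₀) i) :=
    fun i _ => hroot₀
  have hedges : ∀ i < 0, (fun _ : ℕ => v₀) (i + 1) ≠ (fun _ : ℕ => v₀) i ∧
      1 ≤ pairZ ((fun _ : ℕ => v₀) i) ((fun _ : ℕ => m₀) (i + 1)) := fun i hi => absurd hi (by omega)
  have hsTroot : RootAt V (∑ i ∈ Finset.range (0 + 1), (fun _ : ℕ => m₀) i)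
      ((fun _ : ℕ => v₀) 0) := by simpa using hroot₀
  obtain ⟨w, hw⟩ := grow hVs A hA N k' hk'0 hkN 0 (fun _ => m₀) (fun _ => v₀)
    hroots hedges hsTroot hrel
  exact ⟨w, hw.1, hw.2.1, hw.2.2⟩
end

section
/- The following are equivalent: (a) V is semisimple, i.e., R = −R; (b) Σ_{x∈R} x = 0; (c) Σ_{v∈V} ⟨v, x⟩ = 0 for every x ∈ R. Moreover, if Σ_{v∈V} v = 0, then V is semisimple. (For V the set of primitive ray generators of a complete fan Δ, condition (a) is equivalent to reductivity of the automorphism group of the complete toric variety X(N,Δ).) -/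
open Finset

/-! A Demazure root `m` with `η = η_m` has `∑_v ⟨v, m⟩ = -1 + ∑_{v ≠ η} ⟨v, m⟩`, the second sum being
of nonnegative integers. Positive spanning rules out `m` pairing nonpositively with all of `V`, so this
total is `≥ 0`; it vanishes exactly when a single `w ≠ η` has `⟨w, m⟩ = 1` and all other pairings are
`0`, i.e. exactly when `-m` is a root (with `η_{-m} = w`). This gives (a) ⇔ (c). Pairing `∑_{x ∈ R} x`
with `∑_v v` adds up the nonnegative totals over all roots, so (b) ⇒ (c), while (a) ⇒ (b) pairs `x`
with `-x`. If `∑_v v = 0` every total vanishes. -/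

theorem Finset.sum_eq_zero_of_neg_mem {G : Type*} [AddCommGroup G] [IsAddTorsionFree G]
    {s : Finset G} (hs : ∀ x ∈ s, -x ∈ s) : ∑ x ∈ s, x = 0 :=
  sum_involution (fun x _ => -x) (fun x _ => add_neg_cancel x)
    (fun _ _ hx => mt neg_eq_self.mp hx) hs (fun x _ => neg_neg x)

theorem Finset.exists_eq_one_of_sum_eq_one {ι : Type*} {s : Finset ι} {f : ι → ℤ}
    (hf : ∀ i ∈ s, 0 ≤ f i) (h : ∑ i ∈ s, f i = 1) :
    ∃ j ∈ s, f j = 1 ∧ ∀ i ∈ s, i ≠ j → f i = 0 := by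
  obtain ⟨j, hj, hj_pos⟩ : ∃ j ∈ s, (0 : ℤ) < f j :=
    exists_lt_of_sum_lt (by rw [sum_const_zero, h]; exact one_pos)
  have hj_le := single_le_sum hf hj
  refine ⟨j, hj, by omega, fun i hi hij => ?_⟩
  have := add_le_sum hf hi hj hij
  have := hf i hi
  omega

variable {d : ℕ}

theorem pairZ_neg_right (v m : Fin d → ℤ) : pairZ v (-m) = -pairZ v m := by
  simp [pairZ]

theorem pairZ_zero_left (m : Fin d → ℤ) : pairZ 0 m = 0 := by
  simp [pairZ]

theorem pairZ_zero_right (v : Fin d → ℤ) : pairZ v 0 = 0 := by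
  simp [pairZ]

theorem sum_pairZ_left (V : Finset (Fin d → ℤ)) (m : Fin d → ℤ) :
    ∑ v ∈ V, pairZ v m = pairZ (∑ v ∈ V, v) m := by
  simp only [pairZ, Finset.sum_apply, sum_mul]
  exact sum_comm

theorem sum_pairZ_right (R : Finset (Fin d → ℤ)) (v : Fin d → ℤ) :
    ∑ x ∈ R, pairZ v x = pairZ v (∑ x ∈ R, x) := by
  simp only [pairZ, Finset.sum_apply, mul_sum]
  exact sum_comm

theorem PosSpans.eq_zero_of_pairZ_nonpos {V : Finset (Fin d → ℤ)} (hV : PosSpans V)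
    {m : Fin d → ℤ} (hm : ∀ v ∈ V, pairZ v m ≤ 0) : m = 0 := by
  obtain ⟨c, hc, hcm⟩ := hV (fun i => (m i : ℝ))
  have hsq : ∑ i, (m i : ℝ) * m i = ∑ v ∈ V, c v * (pairZ v m : ℝ) := by
    calc ∑ i, (m i : ℝ) * m i = ∑ i, (∑ v ∈ V, c v * v i) * m i := by
          refine sum_congr rfl fun i _ => ?_
          simpa using congrArg (· * (m i : ℝ)) (congrFun hcm i)
      _ = ∑ v ∈ V, c v * (pairZ v m : ℝ) := by
          simp only [pairZ, Int.cast_sum, Int.cast_mul, sum_mul, mul_sum, mul_assoc]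
          exact sum_comm
  have hnonpos : ∑ i, (m i : ℝ) * m i ≤ 0 := hsq ▸
    sum_nonpos fun v hv => mul_nonpos_of_nonneg_of_nonpos (hc v) (by exact_mod_cast hm v hv)
  funext i
  have := (sum_eq_zero_iff_of_nonneg fun i _ => mul_self_nonneg (m i : ℝ)).mp
    (le_antisymm hnonpos (sum_nonneg fun i _ => mul_self_nonneg _)) i (mem_univ i)
  exact_mod_cast mul_self_eq_zero.mp this

namespace IsDemazureRoot

variable {V : Finset (Fin d → ℤ)} {m : Fin d → ℤ}

theorem neg_iff_sum_pairZ_eq_zero (hm : IsDemazureRoot V m) :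
    IsDemazureRoot V (-m) ↔ ∑ v ∈ V, pairZ v m = 0 := by
  obtain ⟨η, hη, hηm, hpos⟩ := hm
  simp only [IsDemazureRoot, pairZ_neg_right, neg_nonneg, neg_inj]
  constructor
  · rintro ⟨w, hw, hwm, hneg⟩
    have hηw : η ≠ w := by rintro rfl; omega
    rw [sum_eq_add_of_mem η w hη hw hηw fun v hv ⟨hvη, hvw⟩ =>
      le_antisymm (hneg v hv hvw) (hpos v hv hvη)]
    omega
  · intro hsum
    have hpos' : ∀ v ∈ V.erase η, 0 ≤ pairZ v m := fun v hv =>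
      hpos v (mem_of_mem_erase hv) (ne_of_mem_erase hv)
    have hrest : ∑ v ∈ V.erase η, pairZ v m = 1 := by
      have := add_sum_erase V (fun v => pairZ v m) hη
      omega
    obtain ⟨w, hw, hwm, hzero⟩ := exists_eq_one_of_sum_eq_one hpos' hrest
    refine ⟨w, mem_of_mem_erase hw, hwm, fun v hv hvw => ?_⟩
    by_cases hvη : v = η
    · subst hvη; omega
    · exact (hzero v (mem_erase.mpr ⟨hvη, hv⟩) hvw).le

theorem sum_pairZ_nonneg (hV : PosSpans V) (hm : IsDemazureRoot V m) :
    0 ≤ ∑ v ∈ V, pairZ v m := by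
  obtain ⟨η, hη, hηm, hpos⟩ := hm
  have hpos' : ∀ v ∈ V.erase η, 0 ≤ pairZ v m := fun v hv =>
    hpos v (mem_of_mem_erase hv) (ne_of_mem_erase hv)
  have hsplit := add_sum_erase V (fun v => pairZ v m) hη
  by_contra! hneg
  have hm0 : m = 0 := hV.eq_zero_of_pairZ_nonpos fun v hv => by
    by_cases hvη : v = η
    · subst hvη; omega
    · have := single_le_sum hpos' (mem_erase.mpr ⟨hvη, hv⟩)
      omega
  rw [hm0, pairZ_zero_right] at hηm
  omega

end IsDemazureRoot

theorem stmt2_general {d : ℕ} (V : Finset (Fin d → ℤ))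
    (hVs : PosSpans V) (R : Finset (Fin d → ℤ))
    (hR : ∀ m, m ∈ R ↔ IsDemazureRoot V m) :
    (((∀ m ∈ R, -m ∈ R) ↔ ∑ x ∈ R, x = 0) ∧
      ((∀ m ∈ R, -m ∈ R) ↔ ∀ x ∈ R, ∑ v ∈ V, pairZ v x = 0)) ∧
    ((∑ v ∈ V, v = 0) → ∀ m ∈ R, -m ∈ R) := by
  have hac : (∀ m ∈ R, -m ∈ R) ↔ ∀ x ∈ R, ∑ v ∈ V, pairZ v x = 0 :=
    forall₂_congr fun m hm => by rw [hR, ((hR m).mp hm).neg_iff_sum_pairZ_eq_zero]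
  have hbc : ∑ x ∈ R, x = 0 → ∀ x ∈ R, ∑ v ∈ V, pairZ v x = 0 := by
    intro hb
    have htotal : ∑ x ∈ R, ∑ v ∈ V, pairZ v x = 0 := by
      rw [sum_comm]
      exact sum_eq_zero fun v _ => by rw [sum_pairZ_right, hb, pairZ_zero_right]
    exact (sum_eq_zero_iff_of_nonneg fun x hx =>
      ((hR x).mp hx).sum_pairZ_nonneg hVs).mp htotal
  refine ⟨⟨⟨sum_eq_zero_of_neg_mem, fun hb => hac.mpr (hbc hb)⟩, hac⟩, fun hsum => ?_⟩
  exact hac.mpr fun x _ => by rw [sum_pairZ_left, hsum, pairZ_zero_left]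

/-- For `V` a finite set of nonzero vectors positively spanning `ℝ^d` with (finite) set of
Demazure roots `R`, the following are equivalent: (a) `V` is semisimple, i.e. `R = -R`;
(b) `∑_{x ∈ R} x = 0`; (c) `∑_{v ∈ V} ⟨v, x⟩ = 0` for every `x ∈ R`.
Moreover, if `∑_{v ∈ V} v = 0`, then `V` is semisimple. -/
theorem stmt2 {d : ℕ} (V : Finset (Fin d → ℤ)) (hV0 : (0 : Fin d → ℤ) ∉ V)
    (hVs : PosSpans V) (R : Finset (Fin d → ℤ))
    (hR : ∀ m, m ∈ R ↔ IsDemazureRoot V m) :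
    (((∀ m ∈ R, -m ∈ R) ↔ ∑ x ∈ R, x = 0) ∧
      ((∀ m ∈ R, -m ∈ R) ↔ ∀ x ∈ R, ∑ v ∈ V, pairZ v x = 0)) ∧
    ((∑ v ∈ V, v = 0) → ∀ m ∈ R, -m ∈ R) :=
  stmt2_general V hVs R hR
end

section
/- Let P be a d-dimensional reflexive polytope and let v, w be roots of P with v ≠ −w and ⟨η_v, w⟩ > 0. Then ⟨η_w, v⟩ = 0, v + w is a root of P with F_{v+w} = F_w, and v + w is a semisimple root if and only if both v and w are semisimple roots. -/
open Finset Set Pointwise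

noncomputable section

/-- The standard pairing `⟨x, y⟩ = ∑ i, x i * y i` on `ℝ^d`. -/
def pairR {d : ℕ} (x y : Fin d → ℝ) : ℝ := ∑ i, x i * y i

/-- A point of `ℝ^d` is a lattice point if all its coordinates are integers. -/
def IsLatticePt {d : ℕ} (x : Fin d → ℝ) : Prop := ∀ i, ∃ n : ℤ, x i = (n : ℝ)

/-- A lattice polytope: the convex hull of finitely many lattice points. -/
def IsLatticePolytope {d : ℕ} (P : Set (Fin d → ℝ)) : Prop :=
  ∃ V : Finset (Fin d → ℝ), (∀ x ∈ V, IsLatticePt x) ∧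
    P = convexHull ℝ (V : Set (Fin d → ℝ))

/-- The dual polytope `P* = {y : ⟨x, y⟩ ≥ -1 for all x ∈ P}`. -/
def polarDual {d : ℕ} (P : Set (Fin d → ℝ)) : Set (Fin d → ℝ) :=
  {y | ∀ x ∈ P, -1 ≤ pairR x y}

/-- A reflexive polytope: a (full-dimensional) lattice polytope with `0` in its interior
whose dual is again a lattice polytope. -/
def IsReflexive {d : ℕ} (P : Set (Fin d → ℝ)) : Prop :=
  IsLatticePolytope P ∧ (0 : Fin d → ℝ) ∈ interior P ∧ IsLatticePolytope (polarDual P)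

/-- `F` is the facet of `P` with (unique) inner normal `η` normalized by `⟨η, F⟩ = -1`:
`F` is the part of `P` where the valid inequality `⟨η, ·⟩ ≥ -1` is tight, and `F` has
dimension `d - 1`. -/
def IsFacetNormal {d : ℕ} (P : Set (Fin d → ℝ)) (η : Fin d → ℝ)
    (F : Set (Fin d → ℝ)) : Prop :=
  (∀ x ∈ P, -1 ≤ pairR η x) ∧ F = {x ∈ P | pairR η x = -1} ∧ F.Nonempty ∧
    Module.finrank ℝ (vectorSpan ℝ F) = d - 1

/-- `F` is a facet ((d-1)-dimensional face) of `P`. -/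
def IsFacet {d : ℕ} (P F : Set (Fin d → ℝ)) : Prop := ∃ η, IsFacetNormal P η F

/-- A root of `P`: a lattice point in the relative interior of a facet of `P`. -/
def IsRoot {d : ℕ} (P : Set (Fin d → ℝ)) (m : Fin d → ℝ) : Prop :=
  IsLatticePt m ∧ ∃ F, IsFacet P F ∧ m ∈ intrinsicInterior ℝ F

/-- The facet `F_m` of `P` containing the root `m` in its relative interior
(for a root `m` there is exactly one such facet). -/
def rootFacet {d : ℕ} (P : Set (Fin d → ℝ)) (m : Fin d → ℝ) : Set (Fin d → ℝ) :=
  ⋃₀ {F | IsFacet P F ∧ m ∈ intrinsicInterior ℝ F}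

/-- The inner normal `η_m = η_{F_m}` of the facet of `P` containing the root `m`. -/
def rootNormal {d : ℕ} (P : Set (Fin d → ℝ)) (m : Fin d → ℝ) : Fin d → ℝ :=
  Classical.epsilon fun η => IsFacetNormal P η (rootFacet P m)

/-- The real extension of the `ℤ`-linear map on the lattice given by an integer matrix. -/
def intMatMap {d : ℕ} (A : Matrix (Fin d) (Fin d) ℤ) (x : Fin d → ℝ) : Fin d → ℝ :=
  (A.map (Int.cast : ℤ → ℝ)).mulVec x

/-- `P` and `Q` are isomorphic as lattice polytopes: some `g ∈ GL_d(ℤ)` has real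
extension mapping `P` onto `Q`. -/
def IsLatticeIso {d : ℕ} (P Q : Set (Fin d → ℝ)) : Prop :=
  ∃ A : Matrix (Fin d) (Fin d) ℤ, IsUnit A.det ∧ intMatMap A '' P = Q

end

open Filter Topology

/-!
Fix a finite set `V` of lattice points with `P* = conv V`, so that
`P = {x | -1 ≤ ⟨u, x⟩ for all u ∈ V}`. A lattice point `m` lies in the relative interior of the
facet with normal `η` exactly when `⟨η, m⟩ = -1` and `⟨u, m⟩ ≥ 0` for every other `u ∈ V`
(the strict inequality `⟨u, m⟩ > -1` becomes `≥ 0` by integrality). With this description the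
theorem is integer bookkeeping with the numbers `⟨u, v⟩` and `⟨u, w⟩`, together with one
geometric input: since `P` is bounded, no nonzero `x` has `⟨u, x⟩ ≥ 0` for all `u ∈ V`.
Applied to `x = v + w` this rules out `⟨η_w, v⟩ > 0`; applied to `x = -v` it forces `v` to
pair positively with some `u ≠ η_v`, which pins down the facet of `-v` when `-(v + w)` is a
root.
-/

lemma pairR_eq_dotProduct {d : ℕ} (x y : Fin d → ℝ) : pairR x y = x ⬝ᵥ y := rfl

namespace IsLatticePt

variable {d : ℕ} {x y : Fin d → ℝ}

lemma neg (hx : IsLatticePt x) : IsLatticePt (-x) := fun i =>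
  let ⟨n, hn⟩ := hx i
  ⟨-n, by simp [hn]⟩

lemma add (hx : IsLatticePt x) (hy : IsLatticePt y) : IsLatticePt (x + y) := fun i =>
  let ⟨n, hn⟩ := hx i
  let ⟨k, hk⟩ := hy i
  ⟨n + k, by simp [hn, hk]⟩

lemma exists_dotProduct_eq_intCast (hx : IsLatticePt x) (hy : IsLatticePt y) :
    ∃ n : ℤ, x ⬝ᵥ y = n := by
  choose a ha using hx
  choose b hb using hy
  exact ⟨∑ i, a i * b i, by simp [dotProduct, ha, hb]⟩

lemma one_le_dotProduct (hx : IsLatticePt x) (hy : IsLatticePt y) (h : 0 < x ⬝ᵥ y) :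
    1 ≤ x ⬝ᵥ y := by
  obtain ⟨n, hn⟩ := hx.exists_dotProduct_eq_intCast hy
  rw [hn] at h ⊢
  exact_mod_cast (show 0 < n by exact_mod_cast h)

lemma dotProduct_nonneg (hx : IsLatticePt x) (hy : IsLatticePt y) (h : -1 < x ⬝ᵥ y) :
    0 ≤ x ⬝ᵥ y := by
  obtain ⟨n, hn⟩ := hx.exists_dotProduct_eq_intCast hy
  rw [hn] at h ⊢
  exact_mod_cast (show -1 < n by exact_mod_cast h)

end IsLatticePt

section IntrinsicInterior

variable {E : Type*} [AddCommGroup E] [Module ℝ E] [TopologicalSpace E] {s U : Set E} {x y : E}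

lemma mem_intrinsicInterior_of_isOpen (hU : IsOpen U) (hxU : x ∈ U) (hxs : x ∈ s)
    (hUs : U ∩ affineSpan ℝ s ⊆ s) : x ∈ intrinsicInterior ℝ s :=
  ⟨⟨x, subset_affineSpan ℝ s hxs⟩,
    mem_interior.2 ⟨Subtype.val ⁻¹' U, fun z hz => hUs ⟨hz, z.2⟩,
      hU.preimage continuous_subtype_val, hxU⟩, rfl⟩

lemma exists_pos_add_smul_sub_mem [IsTopologicalAddGroup E] [ContinuousSMul ℝ E]
    (hx : x ∈ intrinsicInterior ℝ s) (hy : y ∈ s) :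
    ∃ ε : ℝ, 0 < ε ∧ x + ε • (x - y) ∈ s := by
  obtain ⟨p, hp, rfl⟩ := hx
  have hdir : (p : E) - y ∈ (affineSpan ℝ s).direction := by
    rw [direction_affineSpan]
    exact vsub_mem_vectorSpan ℝ (interior_subset (s := Subtype.val ⁻¹' s) hp) hy
  let γ : ℝ → affineSpan ℝ s := fun t =>
    ⟨t • ((p : E) - y) +ᵥ (p : E),
      AffineSubspace.vadd_mem_of_mem_direction (Submodule.smul_mem _ t hdir) p.2⟩
  have hγ : Continuous γ := by fun_prop
  have hγ0 : γ 0 = p := Subtype.ext (by simp [γ])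
  have hnear : ∀ᶠ t in 𝓝[>] 0, γ t ∈ interior ((↑) ⁻¹' s) :=
    (hγ.continuousAt.eventually_mem (hγ0 ▸ isOpen_interior.mem_nhds hp)).filter_mono
      nhdsWithin_le_nhds
  obtain ⟨ε, hmem, hε⟩ := (hnear.and self_mem_nhdsWithin).exists
  exact ⟨ε, hε, by simpa [γ, add_comm] using interior_subset hmem⟩

end IntrinsicInterior

section DotProduct

variable {d : ℕ} {s : Set (Fin d → ℝ)} {η x y z : Fin d → ℝ} {c : ℝ}

lemma le_dotProduct_of_mem_convexHull (h : ∀ u ∈ s, c ≤ x ⬝ᵥ u) (hy : y ∈ convexHull ℝ s) :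
    c ≤ x ⬝ᵥ y :=
  convexHull_min h (convex_halfSpace_ge ⟨dotProduct_add x, fun r u => dotProduct_smul r x u⟩ c) hy

lemma dotProduct_eq_of_mem_affineSpan (h : ∀ x ∈ s, η ⬝ᵥ x = c) (hz : z ∈ affineSpan ℝ s) :
    η ⬝ᵥ z = c := by
  let f : (Fin d → ℝ) →ᵃ[ℝ] ℝ := (dotProductBilin ℝ ℝ η).toAffineMap
  have hle : affineSpan ℝ s ≤ (affineSpan ℝ {c}).comap f :=
    affineSpan_le.2 fun x hx => by simp [f, h x hx]
  simpa [f] using hle hz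

lemma dotProduct_eq_zero_of_mem_vectorSpan (h : ∀ x ∈ s, η ⬝ᵥ x = c) (hz : z ∈ vectorSpan ℝ s) :
    η ⬝ᵥ z = 0 := by
  have hle : vectorSpan ℝ s ≤ LinearMap.ker (dotProductBilin ℝ ℝ η) :=
    Submodule.span_le.2 <| by
      rintro _ ⟨x, hx, y, hy, rfl⟩
      simp [dotProduct_sub, h x hx, h y hy]
  simpa using hle hz

lemma dotProduct_eq_of_mem_intrinsicInterior (hle : ∀ z ∈ s, c ≤ y ⬝ᵥ z)
    (hx : x ∈ intrinsicInterior ℝ s) (hxc : y ⬝ᵥ x = c) (hz : z ∈ s) : y ⬝ᵥ z = c := by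
  obtain ⟨ε, hε, hmem⟩ := exists_pos_add_smul_sub_mem hx hz
  have hbeyond := hle _ hmem
  rw [dotProduct_add, dotProduct_smul, dotProduct_sub, hxc, smul_eq_mul] at hbeyond
  exact le_antisymm (by nlinarith) (hle z hz)

lemma eq_zero_of_dotProduct_eq_zero_of_finrank_eq_sub_one {W : Submodule ℝ (Fin d → ℝ)}
    (hW : Module.finrank ℝ W = d - 1) (hx : x ∉ W) (hyW : ∀ z ∈ W, y ⬝ᵥ z = 0)
    (hyx : y ⬝ᵥ x = 0) : y = 0 := by
  have hlt : W < W ⊔ ℝ ∙ x := left_lt_sup.2 ((Submodule.span_singleton_le_iff_mem x W).not.2 hx)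
  have htop : W ⊔ ℝ ∙ x = ⊤ := by
    apply Submodule.eq_top_of_finrank_eq
    have := Submodule.finrank_lt_finrank_of_lt hlt
    have := Submodule.finrank_le (W ⊔ ℝ ∙ x)
    rw [Module.finrank_fin_fun] at *
    omega
  have hker : W ⊔ ℝ ∙ x ≤ LinearMap.ker (dotProductBilin ℝ ℝ y) :=
    sup_le (fun z hz => hyW z hz) ((Submodule.span_singleton_le_iff_mem _ _).2 hyx)
  ext i
  simpa [dotProduct_single] using hker (htop ▸ Submodule.mem_top : Pi.single i 1 ∈ W ⊔ ℝ ∙ x)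

end DotProduct

lemma mem_iff_forall_neg_one_le_dotProduct {d : ℕ} {P : Set (Fin d → ℝ)} {V : Finset (Fin d → ℝ)}
    (hconv : Convex ℝ P) (hclosed : IsClosed P) (h0 : 0 ∈ P)
    (hPV : polarDual P = convexHull ℝ (V : Set (Fin d → ℝ))) (x : Fin d → ℝ) :
    x ∈ P ↔ ∀ u ∈ V, -1 ≤ u ⬝ᵥ x := by
  refine ⟨fun hx u hu => ?_, fun hx => ?_⟩
  · rw [dotProduct_comm]
    exact (hPV ▸ subset_convexHull ℝ _ hu : u ∈ polarDual P) x hx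
  by_contra hxP
  obtain ⟨f, c, hfP, hfx⟩ := geometric_hahn_banach_closed_point hconv hclosed hxP
  have hc : 0 < c := by simpa using hfP 0 h0
  obtain ⟨a, ha⟩ : ∃ a : Fin d → ℝ, ∀ z, f z = a ⬝ᵥ z :=
    ⟨(dotProductEquiv ℝ (Fin d)).symm f, fun z => by
      conv_lhs => rw [← ContinuousLinearMap.coe_coe,
        ← (dotProductEquiv ℝ (Fin d)).apply_symm_apply (f : (Fin d → ℝ) →ₗ[ℝ] ℝ)]
      rfl⟩
  simp only [ha] at hfP hfx hc
  -- the separating functional, normalized to `-1` on the separating hyperplane, lies in `P*`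
  have hdual : -c⁻¹ • a ∈ polarDual P := fun z hz => by
    rw [pairR_eq_dotProduct, dotProduct_smul, dotProduct_comm, smul_eq_mul, neg_mul,
      neg_le_neg_iff, inv_mul_le_one₀ hc]
    exact (hfP z hz).le
  have := le_dotProduct_of_mem_convexHull (fun u hu => by rw [dotProduct_comm]; exact hx u hu)
    (hPV ▸ hdual)
  rw [dotProduct_smul, dotProduct_comm, smul_eq_mul, neg_mul, neg_le_neg_iff,
    inv_mul_le_one₀ hc] at this
  linarith

lemma eq_zero_of_forall_smul_mem {E : Type*} [NormedAddCommGroup E] [NormedSpace ℝ E]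
    {s : Set E} (hs : Bornology.IsBounded s) {x : E} (h : ∀ t : ℝ, 0 ≤ t → t • x ∈ s) :
    x = 0 := by
  obtain ⟨C, hC⟩ := isBounded_iff_forall_norm_le.1 hs
  by_contra hx
  have hC0 : 0 ≤ C := by simpa using hC _ (h 0 le_rfl)
  have := hC _ (h ((C + 1) / ‖x‖) (by positivity))
  rw [norm_smul, Real.norm_eq_abs, abs_of_nonneg (by positivity),
    div_mul_cancel₀ _ (norm_ne_zero_iff.2 hx)] at this
  linarith

lemma IsReflexive.exists_dual_finset {d : ℕ} {P : Set (Fin d → ℝ)} (hP : IsReflexive P) :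
    ∃ V : Finset (Fin d → ℝ), (∀ u ∈ V, IsLatticePt u) ∧
      polarDual P = convexHull ℝ (V : Set (Fin d → ℝ)) ∧
      (∀ x, x ∈ P ↔ ∀ u ∈ V, -1 ≤ u ⬝ᵥ x) ∧ ∀ x, (∀ u ∈ V, 0 ≤ u ⬝ᵥ x) → x = 0 := by
  obtain ⟨⟨W, -, rfl⟩, h0, V, hVlat, hPV⟩ := hP
  have hmem := mem_iff_forall_neg_one_le_dotProduct (convex_convexHull ℝ _)
    (W.finite_toSet.isCompact_convexHull (𝕜 := ℝ)).isClosed (interior_subset h0) hPV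
  refine ⟨V, hVlat, hPV, hmem, fun x hx => ?_⟩
  refine eq_zero_of_forall_smul_mem (W.finite_toSet.isCompact_convexHull (𝕜 := ℝ)).isBounded
    fun t ht => (hmem _).2 fun u hu => ?_
  rw [dotProduct_smul, smul_eq_mul]
  nlinarith [hx u hu]

/-- A root of the facet with normal `η`, described through the inequalities `-1 ≤ ⟨u, ·⟩`,
`u ∈ V`, that cut out the polytope (see `IsFacetNormal.isRootAt_iff`). -/
structure IsRootAt {d : ℕ} (V : Finset (Fin d → ℝ)) (η m : Fin d → ℝ) : Prop where
  isLatticePt : IsLatticePt m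
  normal_mem : η ∈ V
  normal_dotProduct : η ⬝ᵥ m = -1
  nonneg : ∀ u ∈ V, u ≠ η → 0 ≤ u ⬝ᵥ m

namespace IsFacetNormal

variable {d : ℕ} {P F : Set (Fin d → ℝ)} {V : Finset (Fin d → ℝ)} {η m : Fin d → ℝ}

lemma mem_iff (hF : IsFacetNormal P η F) {x : Fin d → ℝ} : x ∈ F ↔ x ∈ P ∧ η ⬝ᵥ x = -1 := by
  rw [hF.2.1]
  rfl

lemma eq_of_dotProduct_eq (hF : IsFacetNormal P η F) (hm : m ∈ intrinsicInterior ℝ F)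
    {y : Fin d → ℝ} (hy : ∀ x ∈ P, -1 ≤ y ⬝ᵥ x) (hym : y ⬝ᵥ m = -1) : y = η := by
  have hmF := hF.mem_iff.1 (intrinsicInterior_subset hm)
  have hηF : ∀ z ∈ F, η ⬝ᵥ z = -1 := fun z hz => (hF.mem_iff.1 hz).2
  have hyF : ∀ z ∈ F, y ⬝ᵥ z = -1 := fun z hz =>
    dotProduct_eq_of_mem_intrinsicInterior (fun z hz => hy z (hF.mem_iff.1 hz).1) hm hym hz
  have hm_notMem : m ∉ vectorSpan ℝ F := fun h => by
    simpa [hmF.2] using dotProduct_eq_zero_of_mem_vectorSpan hηF h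
  have hyηF : ∀ z ∈ F, (y - η) ⬝ᵥ z = 0 := fun z hz => by
    rw [sub_dotProduct, hyF z hz, hηF z hz, sub_self]
  exact sub_eq_zero.1 <| eq_zero_of_dotProduct_eq_zero_of_finrank_eq_sub_one hF.2.2.2 hm_notMem
    (fun z hz => dotProduct_eq_zero_of_mem_vectorSpan hyηF hz)
    (hyηF m (intrinsicInterior_subset hm))

lemma normal_mem (hF : IsFacetNormal P η F) (hm : m ∈ intrinsicInterior ℝ F)
    (hPV : polarDual P = convexHull ℝ (V : Set (Fin d → ℝ))) : η ∈ V := by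
  have hmF := hF.mem_iff.1 (intrinsicInterior_subset hm)
  have hη : η ∈ convexHull ℝ (V : Set (Fin d → ℝ)) :=
    hPV ▸ fun x hx => by rw [pairR_eq_dotProduct, dotProduct_comm]; exact hF.1 x hx
  obtain ⟨u, hu, hmin⟩ := V.exists_min_image (m ⬝ᵥ ·)
    (Finset.coe_nonempty.1 (convexHull_nonempty_iff.1 ⟨η, hη⟩))
  have hu_dual : ∀ x ∈ P, -1 ≤ u ⬝ᵥ x := fun x hx => by
    rw [dotProduct_comm]; exact (hPV ▸ subset_convexHull ℝ _ hu : u ∈ polarDual P) x hx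
  have hle : m ⬝ᵥ u ≤ m ⬝ᵥ η := le_dotProduct_of_mem_convexHull hmin hη
  rw [dotProduct_comm m, dotProduct_comm m, hmF.2] at hle
  exact hF.eq_of_dotProduct_eq hm hu_dual (le_antisymm hle (hu_dual m hmF.1)) ▸ hu

lemma isRootAt_iff (hF : IsFacetNormal P η F) (hVlat : ∀ u ∈ V, IsLatticePt u)
    (hPV : polarDual P = convexHull ℝ (V : Set (Fin d → ℝ)))
    (hP : ∀ x, x ∈ P ↔ ∀ u ∈ V, -1 ≤ u ⬝ᵥ x) :
    IsLatticePt m ∧ m ∈ intrinsicInterior ℝ F ↔ IsRootAt V η m := by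
  constructor
  · rintro ⟨hlat, hm⟩
    have hmF := hF.mem_iff.1 (intrinsicInterior_subset hm)
    refine ⟨hlat, hF.normal_mem hm hPV, hmF.2, fun u hu hne => ?_⟩
    have hu_le := (hP m).1 hmF.1 u hu
    have hu_dual : ∀ x ∈ P, -1 ≤ u ⬝ᵥ x := fun x hx => (hP x).1 hx u hu
    exact (hVlat u hu).dotProduct_nonneg hlat <|
      hu_le.lt_of_ne fun h => hne (hF.eq_of_dotProduct_eq hm hu_dual h.symm)
  · intro h
    have hP_of : ∀ x, η ⬝ᵥ x = -1 → (∀ u ∈ V.erase η, -1 < u ⬝ᵥ x) → x ∈ P := fun x hηx hx =>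
      (hP x).2 fun u hu => (eq_or_ne u η).elim (fun h => h ▸ hηx.ge)
        fun hne => (hx u (Finset.mem_erase.2 ⟨hne, hu⟩)).le
    have hm_pos : ∀ u ∈ V.erase η, -1 < u ⬝ᵥ m := fun u hu => by
      obtain ⟨hne, hu⟩ := Finset.mem_erase.1 hu
      linarith [h.nonneg u hu hne]
    refine ⟨h.isLatticePt, mem_intrinsicInterior_of_isOpen (U := ⋂ u ∈ V.erase η, {x | -1 < u ⬝ᵥ x})
      (isOpen_biInter_finset fun u _ => isOpen_lt continuous_const (by fun_prop))
      (Set.mem_iInter₂.2 hm_pos)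
      (hF.mem_iff.2 ⟨hP_of m h.normal_dotProduct hm_pos, h.normal_dotProduct⟩) ?_⟩
    rintro x ⟨hxU, hxF⟩
    have hηx := dotProduct_eq_of_mem_affineSpan (fun z hz => (hF.mem_iff.1 hz).2) hxF
    exact hF.mem_iff.2 ⟨hP_of x hηx (Set.mem_iInter₂.1 hxU), hηx⟩

end IsFacetNormal

namespace IsRootAt

variable {d : ℕ} {V : Finset (Fin d → ℝ)} {η ηv ηw θ θ' m v w : Fin d → ℝ}

lemma exists_pos_dotProduct (h : IsRootAt V η m) (hV : ∀ x, (∀ u ∈ V, 0 ≤ u ⬝ᵥ x) → x = 0) :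
    ∃ u ∈ V, u ≠ η ∧ 0 < u ⬝ᵥ m := by
  by_contra! hneg
  have hm : -m = 0 := hV _ fun u hu => by
    rw [dotProduct_neg]
    rcases eq_or_ne u η with rfl | hne
    · rw [h.normal_dotProduct]; norm_num
    · linarith [hneg u hu hne]
  have := h.normal_dotProduct
  simp_all

lemma add (hv : IsRootAt V ηv v) (hw : IsRootAt V ηw w) (hVlat : ∀ u ∈ V, IsLatticePt u)
    (hV : ∀ x, (∀ u ∈ V, 0 ≤ u ⬝ᵥ x) → x = 0) (hvw : v ≠ -w) (hpos : 0 < ηv ⬝ᵥ w) :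
    ηw ⬝ᵥ v = 0 ∧ IsRootAt V ηw (v + w) := by
  have hne : ηw ≠ ηv := by rintro rfl; linarith [hw.normal_dotProduct]
  have hηv : 0 ≤ ηv ⬝ᵥ (v + w) := by
    rw [dotProduct_add, hv.normal_dotProduct]
    linarith [(hVlat ηv hv.normal_mem).one_le_dotProduct hw.isLatticePt hpos]
  have hsum : ∀ u ∈ V, u ≠ ηv → u ≠ ηw → 0 ≤ u ⬝ᵥ (v + w) := fun u hu h₁ h₂ => by
    rw [dotProduct_add]
    linarith [hv.nonneg u hu h₁, hw.nonneg u hu h₂]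
  have hb : ηw ⬝ᵥ v = 0 := by
    refine le_antisymm (not_lt.1 fun hb => hvw (eq_neg_of_add_eq_zero_left (hV _ fun u hu => ?_)))
      (hv.nonneg ηw hw.normal_mem hne)
    rcases eq_or_ne u ηv with rfl | h₁
    · exact hηv
    rcases eq_or_ne u ηw with rfl | h₂
    · rw [dotProduct_add, hw.normal_dotProduct]
      linarith [(hVlat u hu).one_le_dotProduct hv.isLatticePt hb]
    · exact hsum u hu h₁ h₂
  refine ⟨hb, hv.isLatticePt.add hw.isLatticePt, hw.normal_mem,
    by rw [dotProduct_add, hb, hw.normal_dotProduct, zero_add], fun u hu h₂ => ?_⟩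
  rcases eq_or_ne u ηv with rfl | h₁
  · exact hηv
  · exact hsum u hu h₁ h₂

lemma neg_of_neg_add (hv : IsRootAt V ηv v) (hw : IsRootAt V ηw w) (hθ : IsRootAt V θ (-(v + w)))
    (hVlat : ∀ u ∈ V, IsLatticePt u) (hV : ∀ x, (∀ u ∈ V, 0 ≤ u ⬝ᵥ x) → x = 0)
    (hpos : 0 < ηv ⬝ᵥ w) (hb : ηw ⬝ᵥ v = 0) : IsRootAt V θ (-v) ∧ IsRootAt V ηv (-w) := by
  have hsum : ∀ u ∈ V, u ≠ θ → u ⬝ᵥ v + u ⬝ᵥ w ≤ 0 := fun u hu hne => by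
    linarith [hθ.nonneg u hu hne, dotProduct_neg u (v + w), dotProduct_add u v w]
  have hθsum : θ ⬝ᵥ v + θ ⬝ᵥ w = 1 := by
    linarith [hθ.normal_dotProduct, dotProduct_neg θ (v + w), dotProduct_add θ v w]
  have hθηw : θ ≠ ηw := by rintro rfl; linarith [hw.normal_dotProduct]
  have hzero : ∀ u ∈ V, u ≠ θ → u ≠ ηv → u ⬝ᵥ v = 0 := fun u hu h₁ h₂ => by
    rcases eq_or_ne u ηw with rfl | h₃
    · exact hb
    · linarith [hsum u hu h₁, hv.nonneg u hu h₂, hw.nonneg u hu h₃]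
  -- `v` pairs positively with some normal other than `ηv`, and only `θ` is left
  obtain ⟨u, hu, huηv, hupos⟩ := hv.exists_pos_dotProduct hV
  obtain rfl : u = θ := by_contra fun h => hupos.ne' (hzero u hu h huηv)
  have hθv : u ⬝ᵥ v = 1 := le_antisymm (by linarith [hw.nonneg u hu hθηw])
    ((hVlat u hu).one_le_dotProduct hv.isLatticePt hupos)
  have hηvw : ηv ⬝ᵥ w = 1 := by
    linarith [hsum ηv hv.normal_mem (Ne.symm huηv), hv.normal_dotProduct,
      (hVlat ηv hv.normal_mem).one_le_dotProduct hw.isLatticePt hpos]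
  refine ⟨⟨hv.isLatticePt.neg, hu, by rw [dotProduct_neg, hθv], fun u' hu' hne => ?_⟩,
    ⟨hw.isLatticePt.neg, hv.normal_mem, by rw [dotProduct_neg, hηvw], fun u' hu' hne => ?_⟩⟩
  · rw [dotProduct_neg]
    rcases eq_or_ne u' ηv with rfl | h₂
    · rw [hv.normal_dotProduct]; norm_num
    · rw [hzero u' hu' hne h₂]; norm_num
  · rw [dotProduct_neg]
    rcases eq_or_ne u' u with rfl | h₁
    · linarith
    · linarith [hsum u' hu' h₁, hzero u' hu' h₁ hne]

lemma neg_add (hv : IsRootAt V ηv v) (hw : IsRootAt V ηw w) (hθ : IsRootAt V θ (-v))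
    (hθ' : IsRootAt V θ' (-w)) (hpos : 0 < ηv ⬝ᵥ w) (hb : ηw ⬝ᵥ v = 0) :
    IsRootAt V θ (-(v + w)) := by
  have hθ'ηv : θ' = ηv := by
    by_contra h
    linarith [hθ'.nonneg ηv hv.normal_mem (Ne.symm h), dotProduct_neg ηv w]
  subst θ'
  have hηvw : ηv ⬝ᵥ w = 1 := by linarith [hθ'.normal_dotProduct, dotProduct_neg ηv w]
  have hθv : θ ⬝ᵥ v = 1 := by linarith [hθ.normal_dotProduct, dotProduct_neg θ v]
  have hθηv : θ ≠ ηv := by rintro rfl; linarith [hv.normal_dotProduct]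
  have hθηw : θ ≠ ηw := by rintro rfl; linarith
  have hθw : θ ⬝ᵥ w = 0 := le_antisymm
    (by linarith [hθ'.nonneg θ hθ.normal_mem hθηv, dotProduct_neg θ w])
    (hw.nonneg θ hθ.normal_mem hθηw)
  refine ⟨(hv.isLatticePt.add hw.isLatticePt).neg, hθ.normal_mem,
    by rw [dotProduct_neg, dotProduct_add, hθv, hθw]; norm_num, fun u hu hne => ?_⟩
  rw [dotProduct_neg, dotProduct_add]
  have hu := hθ.nonneg u hu hne
  rw [dotProduct_neg] at hu
  rcases eq_or_ne u ηv with rfl | h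
  · linarith [hv.normal_dotProduct]
  · linarith [hθ'.nonneg u ‹u ∈ V› h, dotProduct_neg u w]

end IsRootAt

lemma isRoot_iff_exists_isRootAt {d : ℕ} {P : Set (Fin d → ℝ)} {V : Finset (Fin d → ℝ)}
    (hVlat : ∀ u ∈ V, IsLatticePt u) (hPV : polarDual P = convexHull ℝ (V : Set (Fin d → ℝ)))
    (hP : ∀ x, x ∈ P ↔ ∀ u ∈ V, -1 ≤ u ⬝ᵥ x) {m : Fin d → ℝ} :
    IsRoot P m ↔ ∃ F η, IsFacetNormal P η F ∧ IsRootAt V η m := by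
  constructor
  · rintro ⟨hlat, F, ⟨η, hF⟩, hm⟩
    exact ⟨F, η, hF, (hF.isRootAt_iff hVlat hPV hP).1 ⟨hlat, hm⟩⟩
  · rintro ⟨F, η, hF, h⟩
    obtain ⟨hlat, hm⟩ := (hF.isRootAt_iff hVlat hPV hP).2 h
    exact ⟨hlat, F, ⟨η, hF⟩, hm⟩

/-- Let `v, w` be roots of a reflexive polytope `P` with `v ≠ -w` and `⟨η_v, w⟩ > 0`.
Then `⟨η_w, v⟩ = 0`, `v + w` is a root of `P` with `F_{v+w} = F_w`, and `v + w` is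
semisimple iff both `v` and `w` are semisimple. -/
theorem stmt5 {d : ℕ} (P : Set (Fin d → ℝ)) (hP : IsReflexive P)
    (v w : Fin d → ℝ) (hv : IsRoot P v) (hw : IsRoot P w) (hvw : v ≠ -w)
    (Fv : Set (Fin d → ℝ)) (ηv : Fin d → ℝ) (hFv : IsFacetNormal P ηv Fv)
    (hvFv : v ∈ intrinsicInterior ℝ Fv) (hpos : 0 < pairR ηv w) :
    (∀ (Fw : Set (Fin d → ℝ)) (ηw : Fin d → ℝ), IsFacetNormal P ηw Fw →
        w ∈ intrinsicInterior ℝ Fw →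
        pairR ηw v = 0 ∧ v + w ∈ intrinsicInterior ℝ Fw) ∧
    IsRoot P (v + w) ∧
    (IsRoot P (-(v + w)) ↔ IsRoot P (-v) ∧ IsRoot P (-w)) := by
  obtain ⟨V, hVlat, hPV, hPV', hV⟩ := hP.exists_dual_finset
  have hv' : IsRootAt V ηv v := (hFv.isRootAt_iff hVlat hPV hPV').1 ⟨hv.1, hvFv⟩
  have key : ∀ Fw ηw, IsFacetNormal P ηw Fw → w ∈ intrinsicInterior ℝ Fw →
      pairR ηw v = 0 ∧ v + w ∈ intrinsicInterior ℝ Fw := fun Fw ηw hFw hwFw => by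
    obtain ⟨hb, hsum⟩ :=
      hv'.add ((hFw.isRootAt_iff hVlat hPV hPV').1 ⟨hw.1, hwFw⟩) hVlat hV hvw hpos
    exact ⟨hb, ((hFw.isRootAt_iff hVlat hPV hPV').2 hsum).2⟩
  obtain ⟨Fw, ⟨ηw, hFw⟩, hwFw⟩ := hw.2
  have hw' : IsRootAt V ηw w := (hFw.isRootAt_iff hVlat hPV hPV').1 ⟨hw.1, hwFw⟩
  have hb : ηw ⬝ᵥ v = 0 := (key Fw ηw hFw hwFw).1
  refine ⟨key, ⟨hv.1.add hw.1, Fw, ⟨ηw, hFw⟩, (key Fw ηw hFw hwFw).2⟩, ?_⟩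
  simp only [isRoot_iff_exists_isRootAt hVlat hPV hPV']
  constructor
  · rintro ⟨G, θ, hG, hθ⟩
    obtain ⟨hθv, hηvw⟩ := hv'.neg_of_neg_add hw' hθ hVlat hV hpos hb
    exact ⟨⟨G, θ, hG, hθv⟩, ⟨Fv, ηv, hFv, hηvw⟩⟩
  · rintro ⟨⟨G, θ, hG, hθ⟩, ⟨-, θ', -, hθ'⟩⟩
    exact ⟨G, θ, hG, hv'.neg_add hw' hθ hθ' hpos hb⟩
end
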